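/- arXiv:1210.7620 — 2 statements merged into one kernel-verified Lean document; each statement's English description precedes it below -/
import Mathlib

section
/- For every j ≥ 1 and every binary word ω avoiding the factor (10)^j1 whose associated path ends at ordinate 0 and ends with the suffix (10)^{j-1}1 preceded by a weakly negative part, i.e., ω = μ·0·η·1·(01)^{j-1} with μ ending at ordinate 0 and η either empty or a path starting and ending at ordinate -1 that stays weakly below the line y = -1, if μ does not end with the factor 10, then the word μ·(10)^j·0·η·1 avoids the factor (10)^j1 and has |ω|_1 + 1 ones and |ω|_0 + 1 zeros. -/
/-- The pattern `(10)^j 1` (`true` = 1 / up step, `false` = 0 / down step). -/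
def pat (j : ℕ) : List Bool := (List.replicate j [true, false]).flatten ++ [true]

/-- `(10)^j`. -/
def alt (j : ℕ) : List Bool := (List.replicate j [true, false]).flatten

/-- `(01)^j`. -/
def alt' (j : ℕ) : List Bool := (List.replicate j [false, true]).flatten

def ht (w : List Bool) : ℤ := (w.count true : ℤ) - (w.count false : ℤ)

/-- A strongly negative part read relative to its starting height:
it returns to its starting height and stays weakly below it. -/
def StronglyNeg (w : List Bool) : Prop := ht w = 0 ∧ ∀ p, p <+: w → ht p ≤ 0

lemma alt_succ (j : ℕ) : alt (j+1) = [true, false] ++ alt j := by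
  simp [alt, List.replicate_succ]

lemma alt_length (j : ℕ) : (alt j).length = 2*j := by
  induction j with
  | zero => rfl
  | succ n ih => rw [alt_succ]; simp [ih]; omega

lemma pat_eq (j : ℕ) : pat j = alt j ++ [true] := rfl

lemma pat_length (j : ℕ) : (pat j).length = 2*j+1 := by
  rw [pat_eq]; simp [alt_length]

lemma alt_getElem (j m : ℕ) (h : m < 2*j) :
    (alt j)[m]'(by rw [alt_length]; exact h) = decide (m % 2 = 0) := by
  induction j generalizing m with
  | zero => omega
  | succ n ih =>
    rw [List.getElem_of_eq (alt_succ n)]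
    match m with
    | 0 => simp
    | 1 => simp
    | (m+2) =>
      rw [List.getElem_append_right (by simp)]
      have := ih m (by omega)
      simpa [Nat.add_mod_right] using this

lemma pat_getElem (j m : ℕ) (h : m < 2*j+1) :
    (pat j)[m]'(by rw [pat_length]; exact h) = decide (m % 2 = 0) := by
  rw [List.getElem_of_eq (pat_eq j)]
  rcases Nat.lt_or_ge m (2*j) with hm | hm
  · rw [List.getElem_append_left (by rw [alt_length]; exact hm)]
    exact alt_getElem j m hm
  · have hm' : m = 2*j := by omega
    subst hm'
    rw [List.getElem_append_right (by rw [alt_length])]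
    simp [Nat.mul_mod_right]

lemma alt_count_true (j : ℕ) : (alt j).count true = j := by
  induction j with
  | zero => rfl
  | succ n ih => rw [alt_succ]; simp [List.count_append, ih]

lemma alt_count_false (j : ℕ) : (alt j).count false = j := by
  induction j with
  | zero => rfl
  | succ n ih => rw [alt_succ]; simp [List.count_append, ih]

lemma alt'_succ (j : ℕ) : alt' (j+1) = [false, true] ++ alt' j := by
  simp [alt', List.replicate_succ]

lemma alt'_count_true (j : ℕ) : (alt' j).count true = j := by
  induction j with
  | zero => rfl
  | succ n ih => rw [alt'_succ]; simp [List.count_append, ih]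

lemma alt'_count_false (j : ℕ) : (alt' j).count false = j := by
  induction j with
  | zero => rfl
  | succ n ih => rw [alt'_succ]; simp [List.count_append, ih]

theorem stmt8 (j : ℕ) (hj : 1 ≤ j) (ω μ η : List Bool)
    (havoid : ¬ pat j <:+: ω)
    (hzero : ht ω = 0)
    (hdec : ω = μ ++ [false] ++ η ++ [true] ++ alt' (j - 1))
    (hμ : ht μ = 0)
    (hη : η = [] ∨ StronglyNeg η)
    (hμsuf : ¬ [true, false] <:+ μ) :
    ¬ pat j <:+: (μ ++ alt j ++ [false] ++ η ++ [true]) ∧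
    (μ ++ alt j ++ [false] ++ η ++ [true]).count true = ω.count true + 1 ∧
    (μ ++ alt j ++ [false] ++ η ++ [true]).count false = ω.count false + 1 := by
  subst hdec
  refine ⟨?_, ?_, ?_⟩
  · -- avoidance
    rintro ⟨s, t, hst⟩
    set w : List Bool := μ ++ alt j ++ [false] ++ η ++ [true] with hw
    have hwr : w = μ ++ (alt j ++ ([false] ++ (η ++ [true]))) := by
      rw [hw]; simp [List.append_assoc]
    have hstr : w = s ++ (pat j ++ t) := by rw [← hst]; simp [List.append_assoc]
    -- lengths
    have hwl : w.length = μ.length + 2*j + η.length + 2 := by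
      rw [hw]; simp [alt_length]; omega
    have hil : s.length + (2*j+1) + t.length = w.length := by
      rw [← hst]; simp [pat_length]; omega
    -- characters of w coming from the pattern occurrence
    have hchar : ∀ q m, s.length + m = q → m < 2*j+1 → ∀ hq : q < w.length,
        w[q] = decide (m % 2 = 0) := by
      intro q m hqm hm hq
      subst hqm
      rw [List.getElem_of_eq hstr]
      rw [List.getElem_append_right (Nat.le_add_right _ m)]
      simp only [Nat.add_sub_cancel_left]
      rw [List.getElem_append_left (by rw [pat_length]; exact hm)]
      exact pat_getElem j m hm
    -- characters of w in the μ region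
    have hμchar : ∀ q, (hqμ : q < μ.length) → ∀ hq : q < w.length,
        w[q] = μ[q] := by
      intro q hqμ hq
      rw [List.getElem_of_eq hwr]
      rw [List.getElem_append_left hqμ]
    -- characters of w in the alt region
    have haltchar : ∀ q p, μ.length + p = q → p < 2*j → ∀ hq : q < w.length,
        w[q] = decide (p % 2 = 0) := by
      intro q p hqp hp hq
      subst hqp
      rw [List.getElem_of_eq hwr]
      rw [List.getElem_append_right (Nat.le_add_right _ p)]
      simp only [Nat.add_sub_cancel_left]
      rw [List.getElem_append_left (by rw [alt_length]; exact hp)]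
      exact alt_getElem j p hp
    -- the separating false
    have hfalsechar : ∀ hq : μ.length + 2*j < w.length, w[μ.length + 2*j] = false := by
      intro hq
      rw [List.getElem_of_eq hwr]
      rw [List.getElem_append_right (Nat.le_add_right _ _)]
      simp only [Nat.add_sub_cancel_left]
      rw [List.getElem_append_right (by rw [alt_length] : (alt j).length ≤ 2*j)]
      simp [alt_length]
    rcases Nat.lt_or_ge (s.length + (2*j+1)) (μ.length + 1) with hA | hA
    · -- occurrence entirely inside μ
      apply havoid
      have h1 : s ++ pat j <+: w := ⟨t, by rw [hstr, List.append_assoc]⟩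
      have h2 : s ++ pat j = w.take (s.length + (2*j+1)) := by
        have := List.prefix_iff_eq_take.mp h1
        simpa [pat_length] using this
      have h3 : w.take μ.length = μ := by
        rw [hwr]; exact List.take_left
      have h4 : s ++ pat j <+: μ := by
        rw [← h3]
        have hkey : List.take (s.length + (2*j+1)) w
            = List.take (s.length + (2*j+1)) (List.take μ.length w) := by
          rw [List.take_take, min_eq_left (by omega)]
        rw [hkey] at h2
        rw [h2]
        exact List.take_prefix _ _
      have h5 : pat j <:+: μ :=
        (List.suffix_append s (pat j)).isInfix.trans h4.isInfix
      have hμpre : μ <+: μ ++ [false] ++ η ++ [true] ++ alt' (j-1) :=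
        ⟨[false] ++ (η ++ ([true] ++ alt' (j-1))), by simp [List.append_assoc]⟩
      exact h5.trans hμpre.isInfix
    rcases Nat.lt_or_ge s.length (μ.length + 2*j) with hB' | hB
    swap
    · -- occurrence entirely inside [false] ++ η ++ [true]
      apply havoid
      have h1 : pat j ++ t = w.drop s.length := by
        rw [hstr, List.drop_left]
      have h2 : w.drop (μ.length + 2*j) = [false] ++ η ++ [true] := by
        have hweq : w = (μ ++ alt j) ++ ([false] ++ η ++ [true]) := by
          rw [hw]; simp [List.append_assoc]
        rw [hweq, show μ.length + 2*j = (μ ++ alt j).length by simp [alt_length]]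
        exact List.drop_left
      have h3 : pat j ++ t <:+ [false] ++ η ++ [true] := by
        rw [← h2]
        have hdd : List.drop s.length w
            = List.drop (s.length - (μ.length + 2*j)) (List.drop (μ.length + 2*j) w) := by
          rw [List.drop_drop]; congr 1; omega
        rw [h1, hdd]
        exact List.drop_suffix _ _
      have h4 : pat j <:+: [false] ++ η ++ [true] :=
        (List.prefix_append (pat j) t).isInfix.trans h3.isInfix
      exact h4.trans ⟨μ, alt' (j-1), by simp [List.append_assoc]⟩
    rcases Nat.lt_or_ge (μ.length + 2*j + 1) (s.length + (2*j+1)) with hC | hC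
    · -- occurrence covers both the last step of alt j and the separating false
      have hq1 : μ.length + 2*j - 1 < w.length := by omega
      have hq2 : μ.length + 2*j < w.length := by omega
      have h1a := haltchar (μ.length + 2*j - 1) (2*j-1) (by omega) (by omega) hq1
      have h1b := hchar (μ.length + 2*j - 1) (μ.length + 2*j - 1 - s.length)
        (by omega) (by omega) hq1
      rw [h1a] at h1b
      have h2a := hfalsechar hq2
      have h2b := hchar (μ.length + 2*j) (μ.length + 2*j - s.length)
        (by omega) (by omega) hq2
      rw [h2a] at h2b
      replace h2b := h2b.symm
      rw [show (2*j-1) % 2 = 1 by omega] at h1b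
      simp only [decide_eq_decide, decide_eq_false_iff_not] at h1b h2b
      omega
    -- main case : occurrence ends inside alt j (or exactly at the separating false)
    rcases Nat.lt_or_ge (s.length + 2*j) (μ.length + 2*j) with hD | hD
    swap
    · -- the last character of the pattern falls on the separating false
      have hE : s.length = μ.length := by omega
      have hq2 : μ.length + 2*j < w.length := by omega
      have h2a := hfalsechar hq2
      have h2b := hchar (μ.length + 2*j) (2*j) (by omega) (by omega) hq2
      rw [h2a] at h2b
      replace h2b := h2b.symm
      simp [Nat.mul_mod_right] at h2b
    · -- the last character of the pattern falls inside alt j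
      have hiL : s.length < μ.length := by omega
      have hqe : s.length + 2*j < w.length := by omega
      have hea := haltchar (s.length + 2*j) (s.length + 2*j - μ.length)
        (by omega) (by omega) hqe
      have heb := hchar (s.length + 2*j) (2*j) (by omega) (by omega) hqe
      rw [hea] at heb
      replace heb := decide_eq_decide.mp heb
      have hpar : (s.length + 2*j - μ.length) % 2 = 0 := heb.mpr (by omega)
      have hL2 : s.length + 2 ≤ μ.length := by omega
      have hq1 : μ.length - 1 < w.length := by omega
      have hq2 : μ.length - 2 < w.length := by omega
      have h1a := hμchar (μ.length - 1) (by omega) hq1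
      have h1b := hchar (μ.length - 1) (μ.length - 1 - s.length) (by omega) (by omega) hq1
      rw [h1a] at h1b
      rw [show (μ.length - 1 - s.length) % 2 = 1 by omega] at h1b
      have h2a := hμchar (μ.length - 2) (by omega) hq2
      have h2b := hchar (μ.length - 2) (μ.length - 2 - s.length) (by omega) (by omega) hq2
      rw [h2a] at h2b
      rw [show (μ.length - 2 - s.length) % 2 = 0 by omega] at h2b
      simp only [decide_eq_true_eq] at h2b
      norm_num at h1b h2b
      -- now μ[μ.length-2] = true, μ[μ.length-1] = false, hence [true,false] <:+ μ
      apply hμsuf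
      refine ⟨μ.take (μ.length - 2), ?_⟩
      have hd1 : μ.drop (μ.length - 2) = μ[μ.length-2]'(by omega) :: μ.drop (μ.length - 2 + 1) :=
        List.drop_eq_getElem_cons (by omega)
      rw [show μ.length - 2 + 1 = μ.length - 1 by omega] at hd1
      have hd2 : μ.drop (μ.length - 1) = μ[μ.length-1]'(by omega) :: μ.drop (μ.length - 1 + 1) :=
        List.drop_eq_getElem_cons (by omega)
      rw [show μ.length - 1 + 1 = μ.length by omega, List.drop_length] at hd2
      have : μ.drop (μ.length - 2) = [true, false] := by
        rw [hd1, hd2, h1b, h2b]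
      rw [← this, List.take_append_drop]
  · simp only [List.count_append, alt_count_true, alt'_count_true]
    simp; omega
  · simp only [List.count_append, alt_count_false, alt'_count_false]
    simp; omega
end

section
/- Let j ≥ 1 and let φ be a primitive Dyck path avoiding the factor (x x̄)^j x. If the complement φ^c contains an occurrence of (x x̄)^j x, then in φ^c this occurrence is immediately preceded by at least one up step x and immediately followed by at least one up step x. -/
/-- The complement of a path, swapping up and down steps. -/
def comp (w : List Bool) : List Bool := w.map (fun b => !b)

lemma ht_append (a b : List Bool) : ht (a ++ b) = ht a + ht b := by
  simp [ht, List.count_append]; ring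

lemma comp_append (a b : List Bool) : comp (a ++ b) = comp a ++ comp b := by
  simp [comp]

lemma comp_comp (w : List Bool) : comp (comp w) = w := by
  induction w with
  | nil => rfl
  | cons a t ih => simp_all [comp]

lemma comp_pat (j : ℕ) :
    comp (pat j) = (List.replicate j [false, true]).flatten ++ [false] := by
  simp [comp, pat, List.map_flatten, List.map_replicate]

lemma key (j : ℕ) : true :: (List.replicate j [false, true]).flatten
    = (List.replicate j [true, false]).flatten ++ [true] := by
  induction j with
  | zero => simp
  | succ k ih =>
      simp only [List.replicate_succ, List.flatten_cons, List.cons_append, List.nil_append]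
      rw [← ih]

lemma aux (j : ℕ) : (List.replicate j [false, true]).flatten ++ [false, true]
    = false :: true :: (List.replicate j [false, true]).flatten := by
  induction j with
  | zero => simp
  | succ k ih =>
      have := congrArg (fun l => [false, true] ++ l) ih
      simpa [List.replicate_succ] using this

lemma true_comp_pat (j : ℕ) : true :: comp (pat j) = pat j ++ [false] := by
  rw [comp_pat, pat, ← List.cons_append, key]

lemma comp_pat_true (j : ℕ) : comp (pat j) ++ [true] = false :: pat j := by
  rw [comp_pat, pat, List.append_assoc,
    show ([false] ++ [true] : List Bool) = [false, true] from rfl, aux, key]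

lemma ht_pat (j : ℕ) : ht (pat j) = 1 := by
  induction j with
  | zero => simp [pat, ht]
  | succ k ih =>
      have : pat (k + 1) = [true, false] ++ pat k := by
        simp [pat, List.replicate_succ]
      rw [this, ht_append, ih]
      simp [ht]

lemma length_pat (j : ℕ) : (pat j).length = 2 * j + 1 := by
  induction j with
  | zero => simp [pat]
  | succ k ih =>
      have : pat (k + 1) = [true, false] ++ pat k := by
        simp [pat, List.replicate_succ]
      rw [this]
      simp [ih]
      omega

lemma ht_comp (w : List Bool) : ht (comp w) = - ht w := by
  have h1 : (comp w).count true = w.count false := by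
    have : (true : Bool) = !false := rfl
    rw [this, comp, List.count_map_of_injective _ _ (fun a b => by simp)]
  have h2 : (comp w).count false = w.count true := by
    have : (false : Bool) = !true := rfl
    rw [this, comp, List.count_map_of_injective _ _ (fun a b => by simp)]
  simp [ht, h1, h2]

theorem stmt9 (j : ℕ) (hj : 1 ≤ j) (φ : List Bool)
    (hdyck : ht φ = 0 ∧ ∀ p, p <+: φ → 0 ≤ ht p)
    (hprim : ∀ p, p <+: φ → p ≠ [] → p ≠ φ → 0 < ht p)
    (havoid : ¬ pat j <:+: φ) :
    ∀ u v, comp φ = u ++ pat j ++ v →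
      u.getLast? = some true ∧ v.head? = some true := by
  intro u v h
  obtain ⟨k, rfl⟩ : ∃ k, j = k + 1 := ⟨j - 1, by omega⟩
  have hφ : φ = comp u ++ comp (pat (k + 1)) ++ comp v := by
    have := congrArg comp h
    rw [comp_comp, comp_append, comp_append] at this
    exact this
  constructor
  · rcases hul : u.getLast? with _ | b
    · -- u = [] : φ starts with false, contradicting Dyck
      exfalso
      have hu0 : u = [] := List.getLast?_eq_none_iff.mp hul
      subst hu0
      have hpre : [false] <+: φ := by
        refine ⟨(true :: (List.replicate k [false, true]).flatten) ++ [false] ++ comp v, ?_⟩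
        rw [hφ, comp_pat]
        simp [List.replicate_succ, comp]
      have := hdyck.2 [false] hpre
      simp [ht] at this
    · cases b
      · -- u ends with false: φ contains pat ++ [false]
        exfalso
        obtain ⟨u', rfl⟩ := List.getLast?_eq_some_iff.mp hul
        apply havoid
        refine ⟨comp u', [false] ++ comp v, ?_⟩
        rw [hφ, comp_append]
        have e2 : comp [false] ++ (comp (pat (k + 1)) ++ comp v)
            = (true :: comp (pat (k + 1))) ++ comp v := rfl
        simp only [List.append_assoc]
        rw [e2, true_comp_pat]
        simp
      · rfl
  · rcases hvh : v.head? with _ | b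
    · -- v = [] : prefix comp u ++ [false] has height 0, contradicting primitivity
      exfalso
      have hv0 : v = [] := List.head?_eq_none_iff.mp hvh
      subst hv0
      have hcu : ht (comp u) = 1 := by
        have h0 := hdyck.1
        rw [hφ, ht_append, ht_append, ht_comp (pat (k + 1)), ht_pat] at h0
        have he : ht (comp []) = 0 := by simp [comp, ht]
        rw [he] at h0
        linarith
      have hpre : comp u ++ [false] <+: φ := by
        refine ⟨(true :: (List.replicate k [false, true]).flatten) ++ [false] ++ comp [], ?_⟩
        rw [hφ, comp_pat]
        simp [List.replicate_succ, comp]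
      have hne : comp u ++ [false] ≠ [] := by simp
      have hnephi : comp u ++ [false] ≠ φ := by
        intro he
        have := congrArg List.length he
        rw [hφ] at this
        simp only [comp, List.length_append, List.length_map, length_pat,
          List.length_singleton] at this
        omega
      have := hprim _ hpre hne hnephi
      rw [ht_append, hcu] at this
      simp [ht] at this
    · cases b
      · -- v starts with false: φ contains false :: pat
        exfalso
        obtain ⟨v', rfl⟩ := List.head?_eq_some_iff.mp hvh
        apply havoid
        refine ⟨comp u ++ [false], comp v', ?_⟩
        rw [hφ]
        have e2 : comp (false :: v') = [true] ++ comp v' := rfl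
        rw [e2, show comp u ++ comp (pat (k + 1)) ++ ([true] ++ comp v')
            = comp u ++ (comp (pat (k + 1)) ++ [true]) ++ comp v' from by simp,
          comp_pat_true]
        simp
      · rfl
end
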